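/- For every Y ∈ (0,1) the second derivative of G is G''(Y) = 1/5 + (4/15)·(3/5 + (2/5)·Y^{5/3})^{-7/5}·Y^{4/3} - (2/3)·(3/5 + (2/5)·Y^{5/3})^{-2/5}·Y^{-1/3}, and it satisfies G''(Y) ≤ 1/2 - 2/3 < 0; in particular G is strictly concave on (0,1). -/

import Mathlib

/-- `G(Y) = Y + 3/2 - (5/2)·(3/5 + (2/5)·Y^{5/3})^{3/5} + (1/10)·(Y - 1)²`. -/
noncomputable def Gfun (Y : ℝ) : ℝ :=
  Y + 3 / 2 - (5 / 2) * (3 / 5 + (2 / 5) * Y ^ ((5 : ℝ) / 3)) ^ ((3 : ℝ) / 5) +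
    (1 / 10) * (Y - 1) ^ 2

/-- The first derivative `G'(Y) = 4/5 - (3/5 + (2/5)·Y^{5/3})^{-2/5}·Y^{2/3} + (1/5)·Y`. -/
noncomputable def G'fun (Y : ℝ) : ℝ :=
  4 / 5 - (3 / 5 + (2 / 5) * Y ^ ((5 : ℝ) / 3)) ^ (-((2 : ℝ) / 5)) * Y ^ ((2 : ℝ) / 3) +
    (1 / 5) * Y

/-- The second derivative
`G''(Y) = 1/5 + (4/15)·(3/5 + (2/5)·Y^{5/3})^{-7/5}·Y^{4/3}
- (2/3)·(3/5 + (2/5)·Y^{5/3})^{-2/5}·Y^{-1/3}`. -/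
noncomputable def G''fun (Y : ℝ) : ℝ :=
  1 / 5 + (4 / 15) * (3 / 5 + (2 / 5) * Y ^ ((5 : ℝ) / 3)) ^ (-((7 : ℝ) / 5)) *
    Y ^ ((4 : ℝ) / 3) -
    (2 / 3) * (3 / 5 + (2 / 5) * Y ^ ((5 : ℝ) / 3)) ^ (-((2 : ℝ) / 5)) *
      Y ^ (-((1 : ℝ) / 3))

/-!
Both derivatives are the chain rule applied to `u(Y) = 3/5 + (2/5)·Y^{5/3}`, with `u' = (2/3)·Y^{2/3}`.
For the sign of `G''`, write `t = Y^{5/3}`, so that `u = 3/5 + (2/5)·t` and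
`G'' = 1/5 + u^{-2/5}·Y^{-1/3}·((4/15)·t/u - 2/3)`. On `(0,1)` we have `t ≤ u ≤ 1`, so the bracket
is at most `-2/5` while `u^{-2/5}·Y^{-1/3} ≥ 1`; hence `G'' ≤ -1/5 < -1/6`.
-/

open Real Set

theorem strictConcaveOn_of_hasDerivAt2_neg {D : Set ℝ} (hD : Convex ℝ D) (hDo : IsOpen D)
    {f f' f'' : ℝ → ℝ} (hf : ∀ x ∈ D, HasDerivAt f (f' x) x)
    (hf' : ∀ x ∈ D, HasDerivAt f' (f'' x) x) (hf'' : ∀ x ∈ D, f'' x < 0) :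
    StrictConcaveOn ℝ D f := by
  have hanti : StrictAntiOn f' D :=
    strictAntiOn_of_hasDerivWithinAt_neg hD
      (fun x hx => (hf' x hx).continuousAt.continuousWithinAt)
      (fun x hx => (hf' x (interior_subset hx)).hasDerivWithinAt)
      (fun x hx => hf'' x (interior_subset hx))
  refine StrictAntiOn.strictConcaveOn_of_deriv hD
    (fun x hx => (hf x hx).continuousAt.continuousWithinAt) ?_
  rw [hDo.interior_eq]
  intro x hx y hy hxy
  rw [(hf x hx).deriv, (hf y hy).deriv]
  exact hanti hx hy hxy

theorem hasDerivAt_Gfun_base {Y : ℝ} (hY : 0 < Y) :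
    HasDerivAt (fun Y : ℝ => 3 / 5 + (2 / 5) * Y ^ ((5 : ℝ) / 3))
      ((2 / 3) * Y ^ ((2 : ℝ) / 3)) Y := by
  refine (((hasDerivAt_rpow_const (Or.inl hY.ne')).const_mul (2 / 5)).const_add
    (3 / 5)).congr_deriv ?_
  norm_num
  ring

theorem hasDerivAt_Gfun {Y : ℝ} (hY : 0 < Y) : HasDerivAt Gfun (G'fun Y) Y := by
  have hpow : HasDerivAt (fun Y : ℝ => (3 / 5 + (2 / 5) * Y ^ ((5 : ℝ) / 3)) ^ ((3 : ℝ) / 5))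
      ((3 / 5) * (3 / 5 + (2 / 5) * Y ^ ((5 : ℝ) / 3)) ^ (-((2 : ℝ) / 5)) *
        ((2 / 3) * Y ^ ((2 : ℝ) / 3))) Y := by
    refine ((hasDerivAt_Gfun_base hY).rpow_const (p := (3 : ℝ) / 5)
      (Or.inl (by positivity))).congr_deriv ?_
    norm_num
    ring
  refine ((((hasDerivAt_id Y).add_const (3 / 2)).sub (hpow.const_mul (5 / 2))).add
    ((((hasDerivAt_id Y).sub_const 1).pow 2).const_mul (1 / 10))).congr_deriv ?_
  simp only [G'fun, id]
  ring

theorem hasDerivAt_G'fun {Y : ℝ} (hY : 0 < Y) : HasDerivAt G'fun (G''fun Y) Y := by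
  have hpow : HasDerivAt (fun Y : ℝ => (3 / 5 + (2 / 5) * Y ^ ((5 : ℝ) / 3)) ^ (-((2 : ℝ) / 5)))
      (-(2 / 5) * (3 / 5 + (2 / 5) * Y ^ ((5 : ℝ) / 3)) ^ (-((7 : ℝ) / 5)) *
        ((2 / 3) * Y ^ ((2 : ℝ) / 3))) Y := by
    refine ((hasDerivAt_Gfun_base hY).rpow_const (p := -((2 : ℝ) / 5))
      (Or.inl (by positivity))).congr_deriv ?_
    norm_num
    ring
  have hY23 : HasDerivAt (fun Y : ℝ => Y ^ ((2 : ℝ) / 3)) ((2 / 3) * Y ^ (-((1 : ℝ) / 3))) Y := by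
    refine (hasDerivAt_rpow_const (Or.inl hY.ne')).congr_deriv ?_
    norm_num
  refine (((hasDerivAt_const Y (4 / 5 : ℝ)).sub (hpow.mul hY23)).add
    ((hasDerivAt_id Y).const_mul (1 / 5))).congr_deriv ?_
  have hY43 : Y ^ ((4 : ℝ) / 3) = Y ^ ((2 : ℝ) / 3) * Y ^ ((2 : ℝ) / 3) := by
    rw [← rpow_add hY]; norm_num
  simp only [G''fun, hY43]
  ring

theorem G''fun_le {Y : ℝ} (hY : 0 < Y) (hY1 : Y < 1) : G''fun Y ≤ -(1 / 5) := by
  set t := Y ^ ((5 : ℝ) / 3) with ht_def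
  set u := 3 / 5 + (2 / 5) * t with hu_def
  have ht1 : t ≤ 1 := rpow_le_one hY.le hY1.le (by norm_num)
  have hu : 0 < u := by positivity
  have hfactor : G''fun Y = 1 / 5 + u ^ (-((2 : ℝ) / 5)) * Y ^ (-((1 : ℝ) / 3)) *
      ((4 / 15) * (t / u) - 2 / 3) := by
    have hu75 : u ^ (-((7 : ℝ) / 5)) = u ^ (-((2 : ℝ) / 5)) / u := by
      rw [show -((7 : ℝ) / 5) = -((2 : ℝ) / 5) - 1 by norm_num, rpow_sub_one hu.ne']
    have hY43 : Y ^ ((4 : ℝ) / 3) = t * Y ^ (-((1 : ℝ) / 3)) := by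
      rw [ht_def, ← rpow_add hY]; norm_num
    rw [G''fun, ← ht_def, ← hu_def, hu75, hY43]
    ring
  have hbracket : (4 / 15) * (t / u) - 2 / 3 ≤ -(2 / 5) := by
    have : t / u ≤ 1 := (div_le_one hu).2 (by linarith)
    linarith
  have hweight : 1 ≤ u ^ (-((2 : ℝ) / 5)) * Y ^ (-((1 : ℝ) / 3)) :=
    one_le_mul_of_one_le_of_one_le
      (one_le_rpow_of_pos_of_le_one_of_nonpos hu (by linarith) (by norm_num))
      (one_le_rpow_of_pos_of_le_one_of_nonpos hY hY1.le (by norm_num))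
  calc G''fun Y ≤ 1 / 5 + ((4 / 15) * (t / u) - 2 / 3) := by
        rw [hfactor]
        gcongr
        exact mul_le_of_one_le_left (by linarith) hweight
    _ ≤ -(1 / 5) := by linarith

/-- For every `Y ∈ (0,1)` the second derivative of `G` is `G''` as above, and it satisfies
`G''(Y) ≤ 1/2 - 2/3 < 0`; in particular `G` is strictly concave on `(0,1)`. -/
theorem stmt13 :
    (∀ Y ∈ Set.Ioo (0 : ℝ) 1,
      HasDerivAt Gfun (G'fun Y) Y ∧
      HasDerivAt G'fun (G''fun Y) Y ∧
      G''fun Y ≤ 1 / 2 - 2 / 3) ∧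
    ((1 : ℝ) / 2 - 2 / 3 < 0) ∧
    StrictConcaveOn ℝ (Set.Ioo (0 : ℝ) 1) Gfun := by
  have hG'' : ∀ Y ∈ Ioo (0 : ℝ) 1, G''fun Y ≤ 1 / 2 - 2 / 3 := fun Y hY => by
    linarith [G''fun_le hY.1 hY.2]
  refine ⟨fun Y hY => ⟨hasDerivAt_Gfun hY.1, hasDerivAt_G'fun hY.1, hG'' Y hY⟩, by norm_num, ?_⟩
  exact strictConcaveOn_of_hasDerivAt2_neg (convex_Ioo 0 1) isOpen_Ioo
    (fun Y hY => hasDerivAt_Gfun hY.1) (fun Y hY => hasDerivAt_G'fun hY.1)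
    (fun Y hY => (hG'' Y hY).trans_lt (by norm_num))
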